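/- Let C be the cycle graph of length n and let π be a partition of its vertex set. Then the quotient multigraph C^π is a cactus if and only if π is non-crossing. -/

import Mathlib

set_option autoImplicit false

/-! ## Multigraphs -/

/-- A multigraph: a vertex type `V`, an edge type `E`, and an assignment to each edge of
its unordered pair of endpoints.  Loops and parallel edges are allowed. -/
structure Multigraph (V E : Type) where
  ends : E → Sym2 V

namespace Multigraph

variable {V E : Type}

/-- `G.ReachAvoid F u v` : `v` can be reached from `u` by a walk using no edge of `F`. -/
inductive ReachAvoid (G : Multigraph V E) (F : Set E) : V → V → Prop
  | refl (v : V) : ReachAvoid G F v v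
  | tail {u v w : V} (e : E) (he : e ∉ F) (hvw : G.ends e = s(v, w))
      (h : ReachAvoid G F u v) : ReachAvoid G F u w

/-- A multigraph is connected if any two vertices are joined by a walk. -/
def Connected (G : Multigraph V E) : Prop := ∀ u v : V, G.ReachAvoid ∅ u v

/-- `F` is a set of edges whose deletion disconnects `v` from `w`. -/
def IsEdgeCut (G : Multigraph V E) (v w : V) (F : Set E) : Prop := ¬ G.ReachAvoid F v w

/-- Edge connectivity `λ(v, w)`: the minimum number of edges whose deletion
disconnects `v` from `w`. -/
noncomputable def edgeConn (G : Multigraph V E) (v w : V) : ℕ :=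
  sInf {k : ℕ | ∃ F : Finset E, F.card = k ∧ G.IsEdgeCut v w ↑F}

/-- Walks in a multigraph, recorded together with the edges they traverse. -/
inductive Walk (G : Multigraph V E) : V → V → Type
  | nil (v : V) : Walk G v v
  | cons {u v w : V} (e : E) (huv : G.ends e = s(u, v)) (p : Walk G v w) : Walk G u w

namespace Walk

variable {G : Multigraph V E}

/-- The list of edges traversed by a walk. -/
def edges : ∀ {u v : V}, G.Walk u v → List E
  | _, _, .nil _ => []
  | _, _, .cons e _ p => e :: edges p

/-- The list of vertices visited by a walk (including both endpoints). -/
def verts : ∀ {u v : V}, G.Walk u v → List V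
  | _, v, .nil _ => [v]
  | u, _, .cons _ _ p => u :: verts p

/-- A walk is a path if it visits no vertex twice. -/
def IsPath {u v : V} (p : G.Walk u v) : Prop := p.verts.Nodup

end Walk

/-- `S` is the edge set of a simple cycle of `G`: a nonempty closed walk with no repeated
edges and no repeated vertices (other than the final return to the starting point).
A loop is a simple cycle of length one. -/
def IsSimpleCycleOn [DecidableEq E] (G : Multigraph V E) (S : Finset E) : Prop :=
  ∃ (v : V) (p : G.Walk v v),
    p.edges ≠ [] ∧ p.edges.Nodup ∧ p.verts.dropLast.Nodup ∧ p.edges.toFinset = S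

/-- A cactus: a connected multigraph in which every edge lies on exactly one simple cycle
(simple cycles being identified with their edge sets). -/
def IsCactus [DecidableEq E] (G : Multigraph V E) : Prop :=
  G.Connected ∧ ∀ e : E, ∃! S : Finset E, G.IsSimpleCycleOn S ∧ e ∈ S

/-- Two-edge-connected: connected, and still connected after deleting any single edge. -/
def TwoEdgeConnected (G : Multigraph V E) : Prop :=
  G.Connected ∧ ∀ (e : E) (u v : V), G.ReachAvoid {e} u v

/-- The quotient multigraph by a partition (setoid) of the vertices: the vertices are the
blocks, and each edge joins the blocks of its original endpoints. -/
def quot (G : Multigraph V E) (σ : Setoid V) : Multigraph (Quotient σ) E :=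
  ⟨fun e => (G.ends e).map (Quotient.mk σ)⟩

/-- Degree of a vertex: the number of edge-incidences at it (loops count twice). -/
def degree [DecidableEq V] [Fintype E] (G : Multigraph V E) (v : V) : ℕ :=
  ∑ e : E,
    Sym2.lift
      ⟨fun a b => (if a = v then 1 else 0) + (if b = v then 1 else 0),
        fun _ _ => add_comm _ _⟩ (G.ends e)

/-- A leaf is a vertex of degree one. -/
def IsLeaf [DecidableEq V] [Fintype E] (G : Multigraph V E) (v : V) : Prop :=
  G.degree v = 1

/-- A tree: a connected multigraph with no simple cycles. -/
def IsTree [DecidableEq E] (G : Multigraph V E) : Prop :=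
  G.Connected ∧ ∀ S : Finset E, ¬ G.IsSimpleCycleOn S

end Multigraph

/-- An embedding of the multigraph `H` into `G`, realizing `H` as a subgraph of `G`. -/
structure Multigraph.Embedding {W F V E : Type} (H : Multigraph W F) (G : Multigraph V E) where
  vmap : W → V
  emap : F → E
  vmap_inj : Function.Injective vmap
  emap_inj : Function.Injective emap
  ends_map : ∀ f : F, G.ends (emap f) = (H.ends f).map vmap

/-! ## Multidigraphs -/

/-- A multidigraph: vertex type `V`, edge type `E`, and source and target maps. -/
structure Multidigraph (V E : Type) where
  src : E → V
  tgt : E → V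

namespace Multidigraph

variable {V E : Type}

/-- The underlying multigraph of a multidigraph. -/
def toMultigraph (D : Multidigraph V E) : Multigraph V E :=
  ⟨fun e => s(D.src e, D.tgt e)⟩

/-- Directed walks in a multidigraph. -/
inductive DiWalk (D : Multidigraph V E) : V → V → Type
  | nil (v : V) : DiWalk D v v
  | cons {u v w : V} (e : E) (hs : D.src e = u) (ht : D.tgt e = v)
      (p : DiWalk D v w) : DiWalk D u w

namespace DiWalk

variable {D : Multidigraph V E}

/-- The list of edges traversed by a directed walk. -/
def edges : ∀ {u v : V}, D.DiWalk u v → List E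
  | _, _, .nil _ => []
  | _, _, .cons e _ _ p => e :: edges p

/-- The list of vertices visited by a directed walk. -/
def verts : ∀ {u v : V}, D.DiWalk u v → List V
  | _, v, .nil _ => [v]
  | u, _, .cons _ _ _ p => u :: verts p

end DiWalk

/-- `S` is the edge set of a simple directed cycle of `D`. -/
def IsDiCycleOn [DecidableEq E] (D : Multidigraph V E) (S : Finset E) : Prop :=
  ∃ (v : V) (p : D.DiWalk v v),
    p.edges ≠ [] ∧ p.edges.Nodup ∧ p.verts.dropLast.Nodup ∧ p.edges.toFinset = S

/-- An oriented cactus: the underlying multigraph is a cactus and each of its simple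
cycles (pads) is a directed cycle. -/
def IsOrientedCactus [DecidableEq E] (D : Multidigraph V E) : Prop :=
  D.toMultigraph.IsCactus ∧
    ∀ S : Finset E, D.toMultigraph.IsSimpleCycleOn S → D.IsDiCycleOn S

/-- The quotient multidigraph by a partition (setoid) of the vertices. -/
def quot (D : Multidigraph V E) (σ : Setoid V) : Multidigraph (Quotient σ) E where
  src := fun e => Quotient.mk σ (D.src e)
  tgt := fun e => Quotient.mk σ (D.tgt e)

/-- Indegree of a vertex: the number of edges with target `v`. -/
def indeg [DecidableEq V] [Fintype E] (D : Multidigraph V E) (v : V) : ℕ :=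
  (Finset.univ.filter fun e => D.tgt e = v).card

/-- Outdegree of a vertex: the number of edges with source `v`. -/
def outdeg [DecidableEq V] [Fintype E] (D : Multidigraph V E) (v : V) : ℕ :=
  (Finset.univ.filter fun e => D.src e = v).card

end Multidigraph

/-- An embedding of the multidigraph `H` into `G`, realizing `H` as a subgraph of `G`. -/
structure Multidigraph.Embedding {W F V E : Type}
    (H : Multidigraph W F) (G : Multidigraph V E) where
  vmap : W → V
  emap : F → E
  vmap_inj : Function.Injective vmap
  emap_inj : Function.Injective emap
  src_map : ∀ f : F, G.src (emap f) = vmap (H.src f)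
  tgt_map : ∀ f : F, G.tgt (emap f) = vmap (H.tgt f)

/-! ## Cycle graphs and non-crossing partitions -/

/-- The cycle graph of length `n`: vertices `Fin n`, edges `Fin n`, edge `i` joining
`v i` and `v (i+1)` (indices mod `n`). -/
def cycleGraph (n : ℕ) [NeZero n] : Multigraph (Fin n) (Fin n) :=
  ⟨fun i => s(i, i + 1)⟩

/-- The cycle graph of length `n` in which each edge carries an orientation:
edge `i` is oriented counterclockwise (from `v i` to `v (i+1)`) if `orient i = true`,
and clockwise otherwise. -/
def cycleDigraph (n : ℕ) [NeZero n] (orient : Fin n → Bool) : Multidigraph (Fin n) (Fin n) where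
  src := fun i => if orient i then i else i + 1
  tgt := fun i => if orient i then i + 1 else i

/-- A relation (e.g. a partition) on `Fin m` is non-crossing if there are no indices
`i₁ < i₂ < i₃ < i₄` with `i₁, i₃` in one block and `i₂, i₄` in a different block. -/
def NonCrossingRel {m : ℕ} (r : Fin m → Fin m → Prop) : Prop :=
  ¬ ∃ i₁ i₂ i₃ i₄ : Fin m, i₁ < i₂ ∧ i₂ < i₃ ∧ i₃ < i₄ ∧ r i₁ i₃ ∧ r i₂ i₄ ∧ ¬ r i₁ i₂

/-- The union of a partition `σ` of the vertices `v₁, …, vₙ` (at the even positions) and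
a partition `κ` of the edges `e₁, …, eₙ` (at the odd positions) of a cycle, as a relation
on the `2n` interlaced points `v₁, e₁, v₂, e₂, …, vₙ, eₙ`. -/
def interRel {n : ℕ} (σ κ : Setoid (Fin n)) (x y : Fin (2 * n)) : Prop :=
  (x.val % 2 = 0 ∧ y.val % 2 = 0 ∧
    σ.r ⟨x.val / 2, by have := x.isLt; omega⟩ ⟨y.val / 2, by have := y.isLt; omega⟩) ∨
  (x.val % 2 = 1 ∧ y.val % 2 = 1 ∧
    κ.r ⟨x.val / 2, by have := x.isLt; omega⟩ ⟨y.val / 2, by have := y.isLt; omega⟩)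

/-- `κ` is the Kreweras complement of `σ`: the largest partition of the edges such that
the union `σ ∪ κ` is non-crossing with respect to the interlaced (cyclic) order. -/
def IsKrewerasComplement {n : ℕ} (σ κ : Setoid (Fin n)) : Prop :=
  NonCrossingRel (interRel σ κ) ∧
    ∀ κ' : Setoid (Fin n), NonCrossingRel (interRel σ κ') → κ' ≤ κ

open Classical in
/-- The block of the partition `κ` containing `i`, as a finite set. -/
noncomputable def setoidClass {n : ℕ} (κ : Setoid (Fin n)) (i : Fin n) : Finset (Fin n) :=
  Finset.univ.filter fun j => κ.r i j

open Fin.NatCast in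
/-- `j` is the next element of `B` encountered strictly after `i` in the cyclic order of
`Fin n` (if `B = {i}` then `j = i` itself, one full turn later). -/
def CyclicNextIn {n : ℕ} [NeZero n] (B : Finset (Fin n)) (i j : Fin n) : Prop :=
  i ∈ B ∧ j ∈ B ∧ ∃ d : ℕ, 0 < d ∧ d ≤ n ∧ j = i + (d : Fin n) ∧
    ∀ d' : ℕ, 0 < d' → d' < d → i + (d' : Fin n) ∉ B

/-! ## Wedges of two (di)graphs at their roots -/

/-- The canonical map from the vertices of `t'` into the wedge vertex type
`V ⊕ {x : V' // x ≠ ρ'}`, sending the root `ρ'` to (the image of) `ρ`. -/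
def wedgeJ {V V' : Type} [DecidableEq V'] (ρ : V) (ρ' : V') :
    V' → V ⊕ {x : V' // x ≠ ρ'} :=
  fun x => if h : x = ρ' then Sum.inl ρ else Sum.inr ⟨x, h⟩

/-- The wedge of two multigraphs `t`, `t'` obtained by identifying `ρ ∈ t` with `ρ' ∈ t'`. -/
def Multigraph.wedge {V E V' E' : Type} [DecidableEq V']
    (t : Multigraph V E) (t' : Multigraph V' E') (ρ : V) (ρ' : V') :
    Multigraph (V ⊕ {x : V' // x ≠ ρ'}) (E ⊕ E') :=
  ⟨fun e =>
    match e with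
    | Sum.inl e => (t.ends e).map Sum.inl
    | Sum.inr e => (t'.ends e).map (wedgeJ ρ ρ')⟩

/-- The wedge of two multidigraphs `t`, `t'` obtained by identifying `ρ ∈ t` with `ρ' ∈ t'`. -/
def Multidigraph.wedge {V E V' E' : Type} [DecidableEq V']
    (t : Multidigraph V E) (t' : Multidigraph V' E') (ρ : V) (ρ' : V') :
    Multidigraph (V ⊕ {x : V' // x ≠ ρ'}) (E ⊕ E') where
  src := fun e =>
    match e with
    | Sum.inl e => Sum.inl (t.src e)
    | Sum.inr e => wedgeJ ρ ρ' (t'.src e)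
  tgt := fun e =>
    match e with
    | Sum.inl e => Sum.inl (t.tgt e)
    | Sum.inr e => wedgeJ ρ ρ' (t'.tgt e)

/-! ## Flowers (a cycle with graphs attached) and stars (trees wedged at a common root) -/

/-- The canonical map from the vertices of the `i`-th attached graph into the flower,
sending the basepoint `b i` to the cycle vertex `i`. -/
def flowerJ {n : ℕ} {W : Fin n → Type} [∀ i, DecidableEq (W i)]
    (b : ∀ i, W i) (i : Fin n) :
    W i → Fin n ⊕ (Σ i, {x : W i // x ≠ b i}) :=
  fun x => if h : x = b i then Sum.inl i else Sum.inr ⟨i, x, h⟩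

/-- The flower: a cycle of length `n` with the multigraph `d i` attached at the cycle
vertex `i` via its basepoint `b i`; the attached graphs are disjoint except through the
cycle, and `d i` meets the cycle exactly in the vertex `i`. -/
def flowerGraph {n : ℕ} [NeZero n] {W F : Fin n → Type} [∀ i, DecidableEq (W i)]
    (d : ∀ i, Multigraph (W i) (F i)) (b : ∀ i, W i) :
    Multigraph (Fin n ⊕ (Σ i, {x : W i // x ≠ b i})) (Fin n ⊕ (Σ i, F i)) :=
  ⟨fun e =>
    match e with
    | Sum.inl k => s(Sum.inl k, Sum.inl (k + 1))
    | Sum.inr ⟨i, f⟩ => ((d i).ends f).map (flowerJ b i)⟩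

/-- The canonical map from the vertices of the `i`-th tree into the star, sending the
root `r i` to the common amalgamated root. -/
def starJ {n : ℕ} {W : Fin n → Type} [∀ i, DecidableEq (W i)]
    (r : ∀ i, W i) (i : Fin n) :
    W i → Unit ⊕ (Σ i, {x : W i // x ≠ r i}) :=
  fun x => if h : x = r i then Sum.inl () else Sum.inr ⟨i, x, h⟩

/-- The star: the disjoint union of the multigraphs `t i` with all the roots `r i`
identified to a single vertex. -/
def starGraph {n : ℕ} {W F : Fin n → Type} [∀ i, DecidableEq (W i)]
    (t : ∀ i, Multigraph (W i) (F i)) (r : ∀ i, W i) :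
    Multigraph (Unit ⊕ (Σ i, {x : W i // x ≠ r i})) (Σ i, F i) :=
  ⟨fun e => ((t e.1).ends e.2).map (starJ r e.1)⟩

/-! ## Graphs of matrices -/

/-- The partition of `V` identifying the input `vin` with the output `vout` (and nothing
else). -/
def rootSetoid {V : Type} (vin vout : V) : Setoid V where
  r a b := a = b ∨ ((a = vin ∨ a = vout) ∧ (b = vin ∨ b = vout))
  iseqv := by
    constructor
    · intro x; exact Or.inl rfl
    · rintro x y (rfl | ⟨hx, hy⟩)
      · exact Or.inl rfl
      · exact Or.inr ⟨hy, hx⟩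
    · rintro x y z (rfl | ⟨hx, hy⟩) (rfl | ⟨hy', hz⟩)
      · exact Or.inl rfl
      · exact Or.inr ⟨hy', hz⟩
      · exact Or.inr ⟨hx, hy⟩
      · exact Or.inr ⟨hx, hz⟩

/-- The graph of matrices `Z_g(A₁, …, A_K)` associated to a bi-rooted multidigraph `g`
with input `vin`, output `vout` and edge ordering `o`. -/
noncomputable def graphOfMatrices {V E : Type} [Fintype V] [Fintype E] [DecidableEq V] {K N : ℕ}
    (g : Multidigraph V E) (vin vout : V) (o : E ≃ Fin K)
    (A : Fin K → Matrix (Fin N) (Fin N) ℂ) : Matrix (Fin N) (Fin N) ℂ :=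
  Matrix.of fun i j =>
    ∑ φ : V → Fin N,
      if φ vout = i ∧ φ vin = j then ∏ e : E, A (o e) (φ (g.tgt e)) (φ (g.src e)) else 0

/-! ## Set partitions as finite set systems -/

/-- `P` is a partition of the (finite) type `V`: its blocks are nonempty and every
element of `V` lies in exactly one block. -/
def IsPartitionOf (V : Type) [DecidableEq V] (P : Finset (Finset V)) : Prop :=
  (∀ B ∈ P, B.Nonempty) ∧ ∀ v : V, ∃! B, B ∈ P ∧ v ∈ B

/-- The block of the partition `P` containing `v`. -/
def blockOf {V : Type} [DecidableEq V] (P : Finset (Finset V)) (hP : IsPartitionOf V P)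
    (v : V) : {B : Finset V // B ∈ P} :=
  ⟨Finset.choose (fun B => v ∈ B) P (hP.2 v),
    Finset.choose_mem (fun B => v ∈ B) P (hP.2 v)⟩

/-!
Gluing the vertices of the cycle along `σ` keeps every edge on a closed walk around the cycle,
so `C^σ` is connected and each edge lies on some simple cycle; the point is uniqueness.

If `σ` is non-crossing, take two cyclically consecutive elements `x`, `x + d` of a block. The open
arc between them is a union of blocks (a block meeting it and its complement would cross the
block of `x`), and its only boundary edges are `x` and `x + (d - 1)`; so these two edges separate
the endpoints of each other in `C^σ`. Every non-loop edge `a` arises in this way at both of its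
endpoints, which gives, at each endpoint `B` of `a`, a partner edge `c ≠ a` at `B` lying on every
simple cycle through `a`. A simple cycle meets `B` in only two edges, so walking around a simple
cycle through `a` determines it edge by edge.

Conversely, let `a < b < c < d` with `a ~ c`, `b ~ d`, `a ≁ b`. The edge `e = (c - 1, c)` lies
on a simple cycle using besides `e` only edges of the arc `[a, c - 1]`, and on one using only
edges of `[c, d] ∪ [b, c - 1]`. In a cactus these coincide, so there is a walk from `c - 1` to `c`
inside `[b, c - 1]`, whence some `p ∈ [b, c)` with `p ~ c`. Then `p = b` contradicts `a ≁ b`,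
and otherwise `(a, b, p, d)` is a crossing with a smaller gap `p - b`.
-/

section Arithmetic

open Fin.NatCast Fin.CommRing

variable {n : ℕ} [NeZero n]

lemma Nat.exists_minimal_pos_le {P : ℕ → Prop} {m : ℕ} (hm : 0 < m) (hP : P m) :
    ∃ d, 0 < d ∧ d ≤ m ∧ P d ∧ ∀ t, 0 < t → t < d → ¬ P t := by
  classical
  have hex : ∃ d, 0 < d ∧ P d := ⟨m, hm, hP⟩
  exact ⟨Nat.find hex, (Nat.find_spec hex).1, Nat.find_min' hex ⟨hm, hP⟩,
    (Nat.find_spec hex).2, fun t ht htd hPt => Nat.find_min hex htd ⟨ht, hPt⟩⟩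

lemma Fin.val_add_one_eq_or (i : Fin n) :
    (i + 1).val = i.val + 1 ∨ (i.val + 1 = n ∧ (i + 1).val = 0) := by
  rcases (Nat.succ_le_of_lt i.isLt).lt_or_eq with h | h
  · exact Or.inl (Fin.val_add_one_of_lt' h)
  · have h : i.val + 1 = n := h
    refine Or.inr ⟨h, ?_⟩
    rw [Fin.val_add, Fin.val_one', Nat.add_mod_mod, h, Nat.mod_self]

lemma Fin.val_add_natCast_of_lt (a : Fin n) {t : ℕ} (h : a.val + t < n) :
    (a + (t : Fin n)).val = a.val + t := by
  rw [Fin.val_add, Fin.val_natCast, Nat.add_mod_mod, Nat.mod_eq_of_lt h]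

lemma Fin.eq_add_natCast_val_sub (j x : Fin n) : j = x + ((j - x).val : Fin n) := by
  rw [Fin.cast_val_eq_self]
  ring

lemma Fin.natCast_ne_zero_of_lt {m : ℕ} (h0 : 0 < m) (h : m < n) : (m : Fin n) ≠ 0 := by
  intro hm
  have := congrArg Fin.val hm
  rw [Fin.val_cast_of_lt h, Fin.val_zero] at this
  omega

end Arithmetic

namespace List

lemma IsChain.forall_mem_of_mem {α : Type*} {r : α → α → Prop} {P : α → Prop} :
    ∀ {l : List α}, l.IsChain r → (∀ x ∈ l, ∀ y ∈ l, r x y → (P x ↔ P y)) →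
      ∀ {a : α}, a ∈ l → P a → ∀ b ∈ l, P b
  | [], _, _, _, ha, _ => by simp at ha
  | [x], _, _, _, ha, hPa => by simp_all
  | x :: y :: t, h, hr, a, ha, hPa => by
    rw [List.isChain_cons_cons] at h
    have hxy := hr x (by simp) y (by simp) h.1
    have ih : ∀ {a}, a ∈ y :: t → P a → ∀ b ∈ y :: t, P b := forall_mem_of_mem h.2
      fun u hu w hw => hr u (mem_cons_of_mem x hu) w (mem_cons_of_mem x hw)
    have hy : P y := by
      rcases List.mem_cons.1 ha with rfl | ha
      · exact hxy.1 hPa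
      · exact ih ha hPa y mem_cons_self
    intro b hb
    rcases List.mem_cons.1 hb with rfl | hb
    · exact hxy.2 hy
    · exact ih mem_cons_self hy b hb

end List

namespace Multigraph

variable {V E : Type} {G : Multigraph V E}

def EdgeAdj (G : Multigraph V E) (a b : E) : Prop := ∃ x, x ∈ G.ends a ∧ x ∈ G.ends b

namespace ReachAvoid

variable {F : Set E} {u v w : V}

lemma head {e : E} (he : e ∉ F) (h : G.ends e = s(u, v)) (hr : G.ReachAvoid F v w) :
    G.ReachAvoid F u w := by
  induction hr with
  | refl => exact (refl u).tail e he h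
  | tail f hf hf' _ ih => exact ih.tail f hf hf'

lemma symm (hr : G.ReachAvoid F u v) : G.ReachAvoid F v u := by
  induction hr with
  | refl => exact refl _
  | tail f hf hf' _ ih => exact head hf (by rw [hf', Sym2.eq_swap]) ih

lemma trans (h₁ : G.ReachAvoid F u v) (h₂ : G.ReachAvoid F v w) : G.ReachAvoid F u w := by
  induction h₂ with
  | refl => exact h₁
  | tail f hf hf' _ ih => exact ih.tail f hf hf'

lemma iff_of_forall_ends {P : V → Prop}
    (hP : ∀ e ∉ F, ∀ x y, G.ends e = s(x, y) → (P x ↔ P y)) (hr : G.ReachAvoid F u v) :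
    P u ↔ P v := by
  induction hr with
  | refl => rfl
  | tail f hf hf' _ ih => exact ih.trans (hP f hf _ _ hf')

end ReachAvoid

namespace Walk

variable {u v w : V}

@[simp] lemma length_verts (p : G.Walk u v) : p.verts.length = p.edges.length + 1 := by
  induction p <;> simp [verts, edges, *]

lemma getElem_verts_zero (p : G.Walk u v) : p.verts[0]'(by simp) = u := by
  cases p <;> rfl

lemma getElem_verts_length (p : G.Walk u v) : p.verts[p.edges.length]'(by simp) = v := by
  induction p with
  | nil => rfl
  | cons e he p ih => simpa [verts, edges] using ih

lemma start_mem_verts (p : G.Walk u v) : u ∈ p.verts := by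
  cases p <;> simp [verts]

lemma ends_getElem_edges (p : G.Walk u v) (t : ℕ) (ht : t < p.edges.length) :
    G.ends p.edges[t] =
      s(p.verts[t]'(by rw [length_verts]; omega), p.verts[t + 1]'(by rw [length_verts]; omega)) := by
  induction p generalizing t with
  | nil => simp [edges] at ht
  | cons e he p ih =>
    rcases t with _ | t
    · simpa [edges, verts, getElem_verts_zero] using he
    · simpa [edges, verts] using ih t (by simpa [edges] using ht)

lemma mem_verts_of_mem_ends (p : G.Walk u v) {f : E} (hf : f ∈ p.edges) {x : V}
    (hx : x ∈ G.ends f) : x ∈ p.verts := by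
  induction p with
  | nil => simp [edges] at hf
  | cons e he p ih =>
    simp only [edges, List.mem_cons] at hf
    rcases hf with rfl | hf
    · rw [he, Sym2.mem_iff] at hx
      rcases hx with rfl | rfl
      · exact List.mem_cons_self
      · exact List.mem_cons_of_mem _ (start_mem_verts p)
    · exact List.mem_cons_of_mem _ (ih hf)

lemma IsPath.nodup_edges {p : G.Walk u v} (hp : p.IsPath) : p.edges.Nodup := by
  induction p with
  | nil => simp [edges]
  | cons e he p ih =>
    simp only [IsPath, verts, List.nodup_cons] at hp
    refine List.nodup_cons.2 ⟨fun hmem => hp.1 ?_, ih hp.2⟩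
    exact mem_verts_of_mem_ends p hmem (by rw [he]; exact Sym2.mem_mk_left _ _)

lemma exists_suffix (p : G.Walk u v) (hw : w ∈ p.verts) :
    ∃ q : G.Walk w v, q.verts <:+ p.verts ∧ q.edges ⊆ p.edges := by
  induction p with
  | nil x =>
    obtain rfl : w = x := by simpa [verts] using hw
    exact ⟨nil w, List.suffix_refl _, List.Subset.refl _⟩
  | @cons x _ _ e he p ih =>
    by_cases hwu : w = x
    · subst hwu
      exact ⟨cons e he p, List.suffix_refl _, List.Subset.refl _⟩
    · obtain ⟨q, hqv, hqe⟩ := ih ((List.mem_cons.1 hw).resolve_left hwu)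
      exact ⟨q, hqv.trans (List.suffix_cons _ _), fun _ hf => List.mem_cons_of_mem _ (hqe hf)⟩

lemma exists_split (p : G.Walk u v) {e : E} (he : e ∈ p.edges) :
    ∃ (x y : V) (p₁ : G.Walk u x) (p₂ : G.Walk y v),
      G.ends e = s(x, y) ∧ p.edges = p₁.edges ++ e :: p₂.edges := by
  induction p with
  | nil => simp [edges] at he
  | cons f hf p ih =>
    by_cases hef : e = f
    · subst hef
      exact ⟨_, _, nil _, p, hf, rfl⟩
    · obtain ⟨x, y, p₁, p₂, hxy, hp⟩ := ih ((List.mem_cons.1 he).resolve_left hef)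
      exact ⟨x, y, cons f hf p₁, p₂, hxy, by simp [edges, hp]⟩

lemma reachAvoid {F : Set E} (p : G.Walk u v) (hp : ∀ f ∈ p.edges, f ∉ F) :
    G.ReachAvoid F u v := by
  induction p with
  | nil x => exact .refl x
  | cons e he p ih =>
    exact (ih fun f hf => hp f (List.mem_cons_of_mem _ hf)).head (hp e List.mem_cons_self) he

lemma isChain_edgeAdj (p : G.Walk u v) : p.edges.IsChain G.EdgeAdj := by
  induction p with
  | nil => exact List.isChain_nil
  | @cons _ y _ e he p ih =>
    cases p with
    | nil => exact List.isChain_singleton _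
    | cons f hf p =>
      refine List.isChain_cons_cons.2 ⟨⟨y, ?_, ?_⟩, ih⟩
      · rw [he]; exact Sym2.mem_mk_right _ _
      · rw [hf]; exact Sym2.mem_mk_left _ _

lemma verts_ne_nil {u v : V} (p : G.Walk u v) : p.verts ≠ [] := by
  cases p <;> simp [verts]

lemma dropLast_verts_append {u v : V} (p : G.Walk u v) : p.verts.dropLast ++ [v] = p.verts := by
  conv_rhs => rw [← List.dropLast_concat_getLast p.verts_ne_nil]
  rw [List.getLast_eq_getElem]
  simp [getElem_verts_length]

lemma eq_of_getElem_verts_eq {v : V} (p : G.Walk v v) (hp : p.verts.dropLast.Nodup) {i j : ℕ}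
    (hi : i ≤ p.edges.length) (hj : j ≤ p.edges.length)
    (h : p.verts[i]'(by rw [length_verts]; omega) = p.verts[j]'(by rw [length_verts]; omega)) :
    i = j ∨ (i = 0 ∧ j = p.edges.length) ∨ (i = p.edges.length ∧ j = 0) := by
  rcases Nat.eq_zero_or_pos p.edges.length with hL | hL
  · omega
  have reduce : ∀ k (hk : k ≤ p.edges.length), ∃ (k' : ℕ) (hk' : k' < p.edges.length),
      (k' = k ∨ (k = p.edges.length ∧ k' = 0)) ∧
        p.verts[k]'(by rw [length_verts]; omega) =
          p.verts.dropLast[k']'(by rw [List.length_dropLast, length_verts]; omega) := by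
    intro k hk
    rcases hk.lt_or_eq with hk | rfl
    · exact ⟨k, hk, Or.inl rfl, (List.getElem_dropLast ..).symm⟩
    · refine ⟨0, hL, Or.inr ⟨rfl, rfl⟩, ?_⟩
      rw [List.getElem_dropLast, getElem_verts_length, getElem_verts_zero]
  obtain ⟨i', hi', hii, hvi⟩ := reduce i hi
  obtain ⟨j', hj', hjj, hvj⟩ := reduce j hj
  have : i' = j' := (hp.getElem_inj_iff).1 (hvi.symm.trans (h.trans hvj))
  omega

lemma exists_index_of_mem_ends {u v : V} (p : G.Walk u v) {f : E} (hf : f ∈ p.edges) {x : V}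
    (hx : x ∈ G.ends f) : ∃ (t i : ℕ) (ht : t < p.edges.length) (hi : i ≤ p.edges.length),
      p.edges[t] = f ∧ (i = t ∨ i = t + 1) ∧ p.verts[i]'(by rw [length_verts]; omega) = x := by
  obtain ⟨t, ht, rfl⟩ := List.mem_iff_getElem.1 hf
  rw [ends_getElem_edges p t ht, Sym2.mem_iff] at hx
  rcases hx with rfl | rfl
  · exact ⟨t, t, ht, ht.le, rfl, Or.inl rfl, rfl⟩
  · exact ⟨t, t + 1, ht, ht, rfl, Or.inr rfl, rfl⟩

end Walk

lemma ReachAvoid.exists_isPath {F : Set E} {u v : V} (hr : G.ReachAvoid F u v) :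
    ∃ p : G.Walk v u, p.IsPath ∧ ∀ f ∈ p.edges, f ∉ F := by
  induction hr with
  | refl => exact ⟨.nil _, by simp [Walk.IsPath, Walk.verts], by simp [Walk.edges]⟩
  | @tail v w e he hvw _ ih =>
    obtain ⟨p, hp, hpF⟩ := ih
    by_cases hw : w ∈ p.verts
    · obtain ⟨q, hqv, hqe⟩ := p.exists_suffix hw
      exact ⟨q, hp.sublist hqv.sublist, fun f hf => hpF f (hqe hf)⟩
    · have hwv : G.ends e = s(w, v) := by rw [hvw, Sym2.eq_swap]
      refine ⟨.cons e hwv p, List.nodup_cons.2 ⟨hw, hp⟩, ?_⟩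
      simp only [Walk.edges, List.mem_cons, forall_eq_or_imp]
      exact ⟨he, hpF⟩

namespace IsSimpleCycleOn

variable [DecidableEq E] {S : Finset E}

lemma eq_singleton_of_ends_eq_diag (hS : G.IsSimpleCycleOn S) {e : E} (he : e ∈ S) {x : V}
    (hx : G.ends e = s(x, x)) : S = {e} := by
  obtain ⟨v, p, -, -, hnd, rfl⟩ := hS
  obtain ⟨t, ht, rfl⟩ := List.mem_iff_getElem.1 (List.mem_toFinset.1 he)
  have hdiag : (G.ends p.edges[t]).IsDiag := by rw [hx]; exact Sym2.mk_isDiag_iff.2 rfl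
  rw [p.ends_getElem_edges t ht, Sym2.mk_isDiag_iff] at hdiag
  have htt := p.eq_of_getElem_verts_eq hnd ht.le ht hdiag
  obtain ⟨f, hf⟩ := List.length_eq_one_iff.1 (show p.edges.length = 1 by omega)
  simp [hf]

lemma eq_or_eq_of_mem_ends (hS : G.IsSimpleCycleOn S) {a b c : E} (ha : a ∈ S) (hb : b ∈ S)
    (hc : c ∈ S) (hac : a ≠ c) {x : V} (hxa : x ∈ G.ends a) (hxb : x ∈ G.ends b)
    (hxc : x ∈ G.ends c) : b = a ∨ b = c := by
  obtain ⟨v, p, -, -, hnd, rfl⟩ := hS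
  rw [List.mem_toFinset] at ha hb hc
  obtain ⟨ta, ia, hta, hia, rfl, hia', hxa⟩ := p.exists_index_of_mem_ends ha hxa
  obtain ⟨tb, ib, htb, hib, rfl, hib', hxb⟩ := p.exists_index_of_mem_ends hb hxb
  obtain ⟨tc, ic, htc, hic, rfl, hic', hxc⟩ := p.exists_index_of_mem_ends hc hxc
  have hab := p.eq_of_getElem_verts_eq hnd hia hib (hxa.trans hxb.symm)
  have hac' := p.eq_of_getElem_verts_eq hnd hia hic (hxa.trans hxc.symm)
  have hbc := p.eq_of_getElem_verts_eq hnd hib hic (hxb.trans hxc.symm)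
  have htac : ta ≠ tc := by rintro rfl; exact hac rfl
  by_contra! hne
  have htab : tb ≠ ta := by rintro rfl; exact hne.1 rfl
  have htbc : tb ≠ tc := by rintro rfl; exact hne.2 rfl
  omega

lemma reachAvoid (hS : G.IsSimpleCycleOn S) {e : E} (he : e ∈ S) {x y : V}
    (hxy : G.ends e = s(x, y)) {F : Set E} (hF : ∀ f ∈ S, f ≠ e → f ∉ F) :
    G.ReachAvoid F x y := by
  obtain ⟨v, p, -, hnd, -, rfl⟩ := hS
  obtain ⟨a, b, p₁, p₂, hab, hp⟩ := p.exists_split (List.mem_toFinset.1 he)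
  rw [hp, List.nodup_append, List.nodup_cons] at hnd
  have avoid : ∀ f ∈ p₁.edges ++ p₂.edges, f ∉ F := by
    intro f hf
    refine hF f ?_ ?_
    · rw [List.mem_toFinset, hp]
      exact ((List.sublist_cons_self e p₂.edges).append_left p₁.edges).subset hf
    rintro rfl
    rcases List.mem_append.1 hf with h | h
    · exact hnd.2.2 _ h _ List.mem_cons_self rfl
    · exact hnd.2.1.1 h
  have hba : G.ReachAvoid F b a := (p₂.reachAvoid fun f hf => avoid f (by simp [hf])).trans
    (p₁.reachAvoid fun f hf => avoid f (by simp [hf]))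
  rcases Sym2.eq_iff.1 (hab.symm.trans hxy) with ⟨rfl, rfl⟩ | ⟨rfl, rfl⟩
  · exact hba.symm
  · exact hba

lemma mem_of_not_reachAvoid (hS : G.IsSimpleCycleOn S) {e : E} (he : e ∈ S) {x y : V}
    (hxy : G.ends e = s(x, y)) {c : E} (hc : ¬ G.ReachAvoid {e, c} x y) : c ∈ S := by
  by_contra hcS
  refine hc (hS.reachAvoid he hxy fun f hf hfe hfF => ?_)
  rcases hfF with rfl | rfl
  · exact hfe rfl
  · exact hcS hf

lemma forall_mem_of_edgeAdj (hS : G.IsSimpleCycleOn S) {P : E → Prop}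
    (hP : ∀ a ∈ S, ∀ b ∈ S, G.EdgeAdj a b → P a → P b) {a : E} (ha : a ∈ S) (hPa : P a) :
    ∀ b ∈ S, P b := by
  obtain ⟨v, p, -, -, -, rfl⟩ := hS
  simp only [List.mem_toFinset] at hP ha ⊢
  refine p.isChain_edgeAdj.forall_mem_of_mem (fun x hx y hy hxy => ⟨hP x hx y hy hxy, ?_⟩) ha hPa
  obtain ⟨z, hzx, hzy⟩ := hxy
  exact hP y hy x hx ⟨z, hzy, hzx⟩

end IsSimpleCycleOn

lemma exists_isSimpleCycleOn_of_reachAvoid [DecidableEq E] {e : E} {x y : V}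
    (hxy : G.ends e = s(x, y)) {F : Set E} (heF : e ∈ F) (hr : G.ReachAvoid F x y) :
    ∃ S, G.IsSimpleCycleOn S ∧ e ∈ S ∧ ∀ f ∈ S, f ≠ e → f ∉ F := by
  obtain ⟨p, hp, hpF⟩ := hr.exists_isPath
  have hx : x ∉ p.verts.dropLast ∧ p.verts.dropLast.Nodup := by
    rw [← List.nodup_concat, List.concat_eq_append, p.dropLast_verts_append]
    exact hp
  refine ⟨(Walk.cons e hxy p).edges.toFinset, ⟨x, .cons e hxy p, by simp [Walk.edges], ?_, ?_, rfl⟩,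
    by simp [Walk.edges], ?_⟩
  · exact List.nodup_cons.2 ⟨fun h => hpF e h heF, hp.nodup_edges⟩
  · show (x :: p.verts).dropLast.Nodup
    rw [List.dropLast_cons_of_ne_nil p.verts_ne_nil]
    exact List.nodup_cons.2 hx
  · intro f hf hfe
    simp only [Walk.edges, List.toFinset_cons, Finset.mem_insert, List.mem_toFinset] at hf
    exact hpF f (hf.resolve_left hfe)

end Multigraph

section NonCrossing

open Fin.NatCast Fin.CommRing

variable {n : ℕ} [NeZero n] {σ : Setoid (Fin n)}

lemma NonCrossingRel.comap_add_one (h : NonCrossingRel σ.r) :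
    NonCrossingRel (σ.comap (· + 1)).r := by
  rintro ⟨i₁, i₂, i₃, i₄, h12, h23, h34, r13, r24, n12⟩
  simp only [Fin.lt_def] at h12 h23 h34
  have hv : ∀ i : Fin n, i.val < i₄.val → (i + 1).val = i.val + 1 := fun i hi =>
    Fin.val_add_one_of_lt' (by omega)
  have e₁ := hv i₁ (by omega)
  have e₂ := hv i₂ (by omega)
  have e₃ := hv i₃ h34
  rcases Fin.val_add_one_eq_or i₄ with e₄ | ⟨-, e₄⟩
  · refine h ⟨_, _, _, _, ?_, ?_, ?_, r13, r24, n12⟩ <;> simp only [Fin.lt_def] <;> omega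
  · have h0 : i₄ + 1 = 0 := Fin.ext e₄
    change σ.r (i₂ + 1) (i₄ + 1) at r24
    rw [h0] at r24
    refine h ⟨0, i₁ + 1, i₂ + 1, i₃ + 1, ?_, ?_, ?_, σ.symm' r24, r13,
      fun h01 => n12 (σ.trans' (σ.symm' h01) (σ.symm' r24))⟩ <;>
      simp only [Fin.lt_def, Fin.val_zero] <;> omega

lemma NonCrossingRel.comap_add (h : NonCrossingRel σ.r) (w : Fin n) :
    NonCrossingRel (σ.comap (· + w)).r := by
  rw [← Fin.cast_val_eq_self w]
  induction w.val with
  | zero =>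
    convert h using 2
    ext x y
    simp [Setoid.comap_rel]
  | succ k ih =>
    convert ih.comap_add_one using 2
    ext x y
    simp only [Setoid.comap_rel]
    push_cast
    ring_nf

lemma NonCrossingRel.not_cyclic_cross (h : NonCrossingRel σ.r) (w : Fin n) {a b c d : Fin n}
    (hab : (a - w).val < (b - w).val) (hbc : (b - w).val < (c - w).val)
    (hcd : (c - w).val < (d - w).val) (hac : σ.r a c) (hbd : σ.r b d) (hnab : ¬ σ.r a b) :
    False :=
  h.comap_add w ⟨a - w, b - w, c - w, d - w, hab, hbc, hcd,
    by simpa [Setoid.comap_rel] using hac, by simpa [Setoid.comap_rel] using hbd,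
    by simpa [Setoid.comap_rel] using hnab⟩

end NonCrossing

section CycleQuotient

open Multigraph Fin.NatCast Fin.CommRing

variable {n : ℕ} [NeZero n] {σ : Setoid (Fin n)}

@[simp] lemma ends_quot_cycleGraph (j : Fin n) :
    ((cycleGraph n).quot σ).ends j = s(Quotient.mk σ j, Quotient.mk σ (j + 1)) := by
  simp [Multigraph.quot, cycleGraph]

lemma reachAvoid_quot_add_natCast {F : Set (Fin n)} (a : Fin n) (k : ℕ)
    (h : ∀ t < k, a + (t : Fin n) ∉ F) :
    ((cycleGraph n).quot σ).ReachAvoid F (Quotient.mk σ a) (Quotient.mk σ (a + k)) := by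
  induction k with
  | zero => simpa using ReachAvoid.refl _
  | succ k ih =>
    refine (ih fun t ht => h t (by omega)).tail (a + k) (h k (by omega)) ?_
    rw [ends_quot_cycleGraph]
    push_cast
    ring_nf

lemma reachAvoid_quot_of_le {F : Set (Fin n)} {i j : Fin n} (hij : i ≤ j)
    (h : ∀ f, i ≤ f → f < j → f ∉ F) :
    ((cycleGraph n).quot σ).ReachAvoid F (Quotient.mk σ i) (Quotient.mk σ j) := by
  rw [Fin.le_def] at hij
  have hji : j = i + ((j.val - i.val : ℕ) : Fin n) :=
    Fin.ext (by rw [Fin.val_add_natCast_of_lt] <;> omega)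
  rw [hji]
  refine reachAvoid_quot_add_natCast i _ fun t ht => h _ ?_ ?_ <;>
    simp only [Fin.le_def, Fin.lt_def,
      Fin.val_add_natCast_of_lt i (show i.val + t < n by omega)] <;>
    omega

lemma connected_quot_cycleGraph : ((cycleGraph n).quot σ).Connected := by
  intro U W
  induction U using Quotient.inductionOn with | _ u =>
  induction W using Quotient.inductionOn with | _ w =>
  simpa using reachAvoid_quot_add_natCast (σ := σ) (F := ∅) u (w - u).val (by simp)

lemma exists_isSimpleCycleOn_quot_mem (e : Fin n) :
    ∃ S, ((cycleGraph n).quot σ).IsSimpleCycleOn S ∧ e ∈ S := by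
  have hlast : e + 1 + ((n - 1 : ℕ) : Fin n) = e := by
    rw [Nat.cast_pred (NeZero.pos n), Fin.natCast_self]
    ring
  have havoid : ∀ t < n - 1, e + 1 + (t : Fin n) ∉ ({e} : Set (Fin n)) := by
    intro t ht hte
    have h0 : ((t + 1 : ℕ) : Fin n) = 0 := by
      push_cast
      linear_combination (Set.mem_singleton_iff.1 hte)
    have := Nat.eq_zero_of_dvd_of_lt (Fin.natCast_eq_zero.1 h0) (by omega)
    omega
  have hr := reachAvoid_quot_add_natCast (σ := σ) (e + 1) (n - 1) havoid
  rw [hlast] at hr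
  obtain ⟨S, hS, heS, -⟩ :=
    exists_isSimpleCycleOn_of_reachAvoid (ends_quot_cycleGraph e) (Set.mem_singleton e) hr.symm
  exact ⟨S, hS, heS⟩

lemma mem_iff_mem_of_reachAvoid_quot {J : Set (Fin n)} (hJ : ∀ u ∈ J, ∀ v, σ.r u v → v ∈ J)
    {F : Set (Fin n)} (hF : ∀ j ∉ F, (j ∈ J ↔ j + 1 ∈ J)) {u v : Fin n}
    (hr : ((cycleGraph n).quot σ).ReachAvoid F (Quotient.mk σ u) (Quotient.mk σ v)) :
    u ∈ J ↔ v ∈ J := by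
  have hP : ∀ w, (∃ w' ∈ J, Quotient.mk σ w' = Quotient.mk σ w) ↔ w ∈ J := fun w =>
    ⟨fun ⟨w', hw', h⟩ => hJ w' hw' w (Quotient.exact h), fun hw => ⟨w, hw, rfl⟩⟩
  rw [← hP u, ← hP v]
  refine hr.iff_of_forall_ends (P := fun U => ∃ w' ∈ J, Quotient.mk σ w' = U)
    fun f hf X Y hXY => ?_
  rw [ends_quot_cycleGraph] at hXY
  rcases Sym2.eq_iff.1 hXY with ⟨rfl, rfl⟩ | ⟨rfl, rfl⟩
  · rw [hP, hP]; exact hF f hf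
  · rw [hP, hP]; exact (hF f hf).symm

end CycleQuotient

section OpenArc

open Multigraph Fin.NatCast Fin.CommRing

variable {n : ℕ}

-- The vertices strictly between `x` and `x + d` in the cyclic order.
def openArc (x : Fin n) (d : ℕ) : Set (Fin n) := {v | 0 < (v - x).val ∧ (v - x).val < d}

lemma mem_openArc {x v : Fin n} {d : ℕ} : v ∈ openArc x d ↔ 0 < (v - x).val ∧ (v - x).val < d :=
  Iff.rfl

variable [NeZero n] {σ : Setoid (Fin n)}

lemma NonCrossingRel.openArc_saturated (hnc : NonCrossingRel σ.r) {x : Fin n} {d : ℕ}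
    (hxd : σ.r x (x + d)) (hgap : ∀ v ∈ openArc x d, ¬ σ.r x v) {u : Fin n}
    (hu : u ∈ openArc x d) {v : Fin n} (huv : σ.r u v) : v ∈ openArc x d := by
  have hxu : ¬ σ.r x u := hgap u hu
  by_contra hv
  simp only [mem_openArc] at hu hv
  rcases Nat.eq_zero_or_pos (v - x).val with h0 | hpos
  · rw [Fin.eq_add_natCast_val_sub v x, h0, Nat.cast_zero, add_zero] at huv
    exact hxu (σ.symm' huv)
  have hdv : d ≤ (v - x).val := by omega
  have hdn : d < n := hdv.trans_lt (v - x).isLt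
  rcases hdv.lt_or_eq with hlt | heq
  · refine hnc.not_cyclic_cross x (b := u) (d := v) ?_ ?_ ?_ hxd huv hxu <;>
      simp only [sub_self, add_sub_cancel_left, Fin.val_zero, Fin.val_cast_of_lt hdn] <;> omega
  · rw [Fin.eq_add_natCast_val_sub v x, ← heq] at huv
    exact hxu (σ.trans' hxd (σ.symm' huv))

lemma add_one_mem_openArc_iff {x j : Fin n} {d : ℕ} (hdn : d ≤ n) (hjx : j ≠ x)
    (hjd : j ≠ x + ((d - 1 : ℕ) : Fin n)) : j + 1 ∈ openArc x d ↔ j ∈ openArc x d := by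
  have hk0 : (j - x).val ≠ 0 := fun h => hjx (by rw [Fin.eq_add_natCast_val_sub j x, h]; simp)
  have hkd : (j - x).val ≠ d - 1 := fun h => hjd (by rw [Fin.eq_add_natCast_val_sub j x, h])
  simp only [mem_openArc, show j + 1 - x = (j - x) + 1 by ring]
  rcases Fin.val_add_one_eq_or (j - x) with h | ⟨h, h'⟩ <;> omega

lemma not_reachAvoid_quot_of_openArc (hnc : NonCrossingRel σ.r) {x : Fin n} {d : ℕ}
    (hd : 2 ≤ d) (hdn : d ≤ n) (hxd : σ.r x (x + d)) (hgap : ∀ v ∈ openArc x d, ¬ σ.r x v)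
    {a : Fin n} (ha : a = x ∨ a = x + ((d - 1 : ℕ) : Fin n)) :
    ¬ ((cycleGraph n).quot σ).ReachAvoid {x, x + ((d - 1 : ℕ) : Fin n)}
      (Quotient.mk σ a) (Quotient.mk σ (a + 1)) := by
  intro hr
  have key := mem_iff_mem_of_reachAvoid_quot
    (fun u hu v huv => hnc.openArc_saturated hxd hgap hu huv)
    (fun f hf => (add_one_mem_openArc_iff hdn (fun h => hf (Or.inl h))
      (fun h => hf (Or.inr h))).symm) hr
  have hd1 : ((d - 1 : ℕ) : Fin n) + 1 = d := by
    rw [Nat.cast_pred (by omega)]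
    ring
  simp only [mem_openArc] at key
  rcases ha with rfl | rfl
  · simp only [sub_self, add_sub_cancel_left, Fin.val_zero, Fin.val_one',
      Nat.mod_eq_of_lt (show 1 < n by omega)] at key
    omega
  · simp only [add_assoc, hd1, add_sub_cancel_left,
      Fin.val_cast_of_lt (show d - 1 < n by omega)] at key
    rcases hdn.lt_or_eq with hdn | rfl
    · rw [Fin.val_cast_of_lt hdn] at key
      omega
    · simp only [Fin.natCast_self, Fin.val_zero] at key
      omega

lemma exists_cut_partner_tail (hnc : NonCrossingRel σ.r) {a : Fin n} (ha : ¬ σ.r a (a + 1)) :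
    ∃ c, c ≠ a ∧ Quotient.mk σ (c + 1) = Quotient.mk σ a ∧
      ¬ ((cycleGraph n).quot σ).ReachAvoid {a, c} (Quotient.mk σ a) (Quotient.mk σ (a + 1)) := by
  obtain ⟨d, hd0, hdn, hd, hmin⟩ := Nat.exists_minimal_pos_le (P := fun d => σ.r a (a + d))
    (NeZero.pos n) (by rw [Fin.natCast_self, add_zero])
  have hd2 : 2 ≤ d := by
    by_contra h
    obtain rfl : d = 1 := by omega
    exact ha (by simpa using hd)
  have hgap : ∀ v ∈ openArc a d, ¬ σ.r a v := by
    rintro v ⟨h1, h2⟩ hav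
    rw [Fin.eq_add_natCast_val_sub v a] at hav
    exact hmin _ h1 h2 hav
  refine ⟨a + ((d - 1 : ℕ) : Fin n), fun h => ?_, ?_,
    not_reachAvoid_quot_of_openArc hnc hd2 hdn hd hgap (Or.inl rfl)⟩
  · have hne : ((d - 1 : ℕ) : Fin n) ≠ 0 := Fin.natCast_ne_zero_of_lt (by omega) (by omega)
    exact hne (by linear_combination h)
  · rw [Nat.cast_pred hd0, show a + (d - 1) + 1 = a + d by ring]
    exact Quotient.sound (σ.symm' hd)

lemma exists_cut_partner_head (hnc : NonCrossingRel σ.r) {a : Fin n} (ha : ¬ σ.r a (a + 1)) :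
    ∃ c, c ≠ a ∧ Quotient.mk σ c = Quotient.mk σ (a + 1) ∧
      ¬ ((cycleGraph n).quot σ).ReachAvoid {a, c} (Quotient.mk σ a) (Quotient.mk σ (a + 1)) := by
  obtain ⟨d, hd0, hdn, hd, hmin⟩ :=
    Nat.exists_minimal_pos_le (P := fun d => σ.r (a + 1 - d) (a + 1))
    (NeZero.pos n) (by rw [Fin.natCast_self, sub_zero])
  -- `x` is the cyclic predecessor of `a + 1` in its block.
  obtain ⟨x, hx⟩ : ∃ x, x = a + 1 - d := ⟨_, rfl⟩
  have hxd : x + d = a + 1 := by rw [hx]; ring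
  have hxa : a = x + ((d - 1 : ℕ) : Fin n) := by rw [hx, Nat.cast_pred hd0]; ring
  simp only [← hx] at hd
  have hd2 : 2 ≤ d := by
    by_contra h
    obtain rfl : d = 1 := by omega
    rw [Nat.sub_self, Nat.cast_zero, add_zero] at hxa
    exact ha (hxa ▸ hd)
  have hgap : ∀ v ∈ openArc x d, ¬ σ.r x v := by
    rintro v ⟨h1, h2⟩ hxv
    have hv : a + 1 - ((d - (v - x).val : ℕ) : Fin n) = v := by
      rw [Nat.cast_sub h2.le, Fin.cast_val_eq_self, ← hxd]
      ring
    have := hmin (d - (v - x).val) (by omega) (by omega)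
    rw [hv] at this
    exact this (σ.trans' (σ.symm' hxv) hd)
  refine ⟨x, fun h => ?_, Quotient.sound hd, ?_⟩
  · have hne : ((d - 1 : ℕ) : Fin n) ≠ 0 := Fin.natCast_ne_zero_of_lt (by omega) (by omega)
    exact hne (by linear_combination -hxa - h)
  · rw [Set.pair_comm, hxa]
    exact not_reachAvoid_quot_of_openArc hnc hd2 hdn (by rwa [hxd]) hgap (Or.inr rfl)

lemma exists_cut_partner (hnc : NonCrossingRel σ.r) {a : Fin n} (ha : ¬ σ.r a (a + 1))
    {B : Quotient σ} (hB : B ∈ ((cycleGraph n).quot σ).ends a) :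
    ∃ c, c ≠ a ∧ B ∈ ((cycleGraph n).quot σ).ends c ∧
      ¬ ((cycleGraph n).quot σ).ReachAvoid {a, c} (Quotient.mk σ a) (Quotient.mk σ (a + 1)) := by
  rw [ends_quot_cycleGraph, Sym2.mem_iff] at hB
  rcases hB with rfl | rfl
  · obtain ⟨c, hca, hc, hcut⟩ := exists_cut_partner_tail hnc ha
    exact ⟨c, hca, by rw [ends_quot_cycleGraph, ← hc]; exact Sym2.mem_mk_right _ _, hcut⟩
  · obtain ⟨c, hca, hc, hcut⟩ := exists_cut_partner_head hnc ha
    exact ⟨c, hca, by rw [ends_quot_cycleGraph, ← hc]; exact Sym2.mem_mk_left _ _, hcut⟩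

end OpenArc

section Cactus

open Multigraph Fin.NatCast Fin.CommRing

variable {n : ℕ} [NeZero n] {σ : Setoid (Fin n)}

lemma mem_of_edgeAdj_of_isSimpleCycleOn_quot (hnc : NonCrossingRel σ.r) {S T : Finset (Fin n)}
    (hS : ((cycleGraph n).quot σ).IsSimpleCycleOn S)
    (hT : ((cycleGraph n).quot σ).IsSimpleCycleOn T) {a b : Fin n} (haS : a ∈ S) (haT : a ∈ T)
    (hbS : b ∈ S) (hab : ((cycleGraph n).quot σ).EdgeAdj a b) : b ∈ T := by
  by_cases ha : σ.r a (a + 1)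
  · have hloop : ((cycleGraph n).quot σ).ends a = s(Quotient.mk σ a, Quotient.mk σ a) := by
      rw [ends_quot_cycleGraph, Quotient.sound (σ.symm' ha)]
    rw [hS.eq_singleton_of_ends_eq_diag haS hloop, Finset.mem_singleton] at hbS
    exact hbS ▸ haT
  · obtain ⟨B, hBa, hBb⟩ := hab
    obtain ⟨c, hca, hBc, hcut⟩ := exists_cut_partner hnc ha hBa
    have hcS := hS.mem_of_not_reachAvoid haS (ends_quot_cycleGraph a) hcut
    rcases hS.eq_or_eq_of_mem_ends haS hbS hcS hca.symm hBa hBb hBc with rfl | rfl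
    · exact haT
    · exact hT.mem_of_not_reachAvoid haT (ends_quot_cycleGraph a) hcut

lemma subset_of_isSimpleCycleOn_quot (hnc : NonCrossingRel σ.r) {S T : Finset (Fin n)}
    (hS : ((cycleGraph n).quot σ).IsSimpleCycleOn S)
    (hT : ((cycleGraph n).quot σ).IsSimpleCycleOn T) {e : Fin n} (heS : e ∈ S) (heT : e ∈ T) :
    S ⊆ T :=
  hS.forall_mem_of_edgeAdj (P := (· ∈ T))
    (fun _ ha _ hb hab haT => mem_of_edgeAdj_of_isSimpleCycleOn_quot hnc hS hT ha haT hb hab)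
    heS heT

theorem isCactus_quot_cycleGraph (hnc : NonCrossingRel σ.r) :
    ((cycleGraph n).quot σ).IsCactus := by
  refine ⟨connected_quot_cycleGraph, fun e => ?_⟩
  obtain ⟨S, hS, heS⟩ := exists_isSimpleCycleOn_quot_mem e
  exact ⟨S, ⟨hS, heS⟩, fun T ⟨hT, heT⟩ =>
    (subset_of_isSimpleCycleOn_quot hnc hT hS heT heS).antisymm
      (subset_of_isSimpleCycleOn_quot hnc hS hT heS heT)⟩

lemma exists_rel_of_reachAvoid_quot {b e : Fin n} (hbe : b ≤ e) (he : e.val + 1 < n)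
    (hr : ((cycleGraph n).quot σ).ReachAvoid {f | ¬ (b ≤ f ∧ f < e)}
      (Quotient.mk σ e) (Quotient.mk σ (e + 1))) :
    ∃ p, b ≤ p ∧ p ≤ e ∧ σ.r p (e + 1) := by
  have hJ := mem_iff_mem_of_reachAvoid_quot (J := {p | ∃ q, b ≤ q ∧ q ≤ e ∧ σ.r q p})
    (fun u ⟨q, hbq, hqe, hqu⟩ v huv => ⟨q, hbq, hqe, σ.trans' hqu huv⟩) (fun f hf => ?_) hr
  · exact hJ.1 ⟨e, hbe, le_rfl, σ.refl' e⟩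
  · obtain ⟨hbf, hfe⟩ := not_not.1 hf
    rw [Fin.le_def] at hbf
    rw [Fin.lt_def] at hfe
    have hf₁ : (f + 1).val = f.val + 1 := Fin.val_add_one_of_lt' (by omega)
    exact iff_of_true ⟨f, Fin.le_def.2 hbf, Fin.le_def.2 (by omega), σ.refl' f⟩
      ⟨f + 1, Fin.le_def.2 (by omega), Fin.le_def.2 (by omega), σ.refl' _⟩

lemma exists_rel_between_of_isCactus (hC : ((cycleGraph n).quot σ).IsCactus) {a b c d : Fin n}
    (hab : a < b) (hbc : b < c) (hcd : c < d) (hac : σ.r a c) (hbd : σ.r b d) :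
    ∃ p, b ≤ p ∧ p < c ∧ σ.r p c := by
  simp only [Fin.lt_def] at hab hbc hcd
  obtain ⟨e, he⟩ : ∃ e : Fin n, e.val + 1 = c.val :=
    ⟨⟨c.val - 1, by omega⟩, Nat.sub_add_cancel (by omega)⟩
  obtain rfl : e + 1 = c := Fin.ext (by rw [Fin.val_add_one_of_lt' (by omega)]; exact he)
  have hends := ends_quot_cycleGraph (σ := σ) e
  have hbe : b ≤ e := Fin.le_def.2 (by omega)
  have hec : e < e + 1 := Fin.lt_def.2 (by omega)
  obtain ⟨F₁, hF₁⟩ : ∃ F : Set (Fin n), ∀ f, f ∈ F ↔ ¬ (a ≤ f ∧ f < e) := ⟨_, fun _ => Iff.rfl⟩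
  obtain ⟨F₂, hF₂⟩ : ∃ F : Set (Fin n), ∀ f, f ∈ F ↔ ¬ ((e + 1 ≤ f ∧ f < d) ∨ (b ≤ f ∧ f < e)) :=
    ⟨_, fun _ => Iff.rfl⟩
  have r₁ : ((cycleGraph n).quot σ).ReachAvoid F₁ (Quotient.mk σ e) (Quotient.mk σ (e + 1)) := by
    rw [← Quotient.sound hac]
    exact (reachAvoid_quot_of_le (Fin.le_def.2 (by omega))
      fun f h₁ h₂ hf => (hF₁ f).1 hf ⟨h₁, h₂⟩).symm
  have r₂ : ((cycleGraph n).quot σ).ReachAvoid F₂ (Quotient.mk σ e) (Quotient.mk σ (e + 1)) := by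
    have h₁ := reachAvoid_quot_of_le (σ := σ) (Fin.le_def.2 hcd.le)
      fun f h₁ h₂ hf => (hF₂ f).1 hf (Or.inl ⟨h₁, h₂⟩)
    have h₂ := reachAvoid_quot_of_le (σ := σ) hbe fun f h₁ h₂ hf => (hF₂ f).1 hf (Or.inr ⟨h₁, h₂⟩)
    rw [← Quotient.sound hbd] at h₁
    exact (h₁.trans h₂).symm
  obtain ⟨S₁, hS₁, heS₁, hS₁F⟩ :=
    exists_isSimpleCycleOn_of_reachAvoid hends ((hF₁ e).2 fun h => h.2.false) r₁
  obtain ⟨S₂, hS₂, heS₂, hS₂F⟩ := exists_isSimpleCycleOn_of_reachAvoid hends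
    ((hF₂ e).2 fun h => h.elim (fun h => (hec.trans_le h.1).false) fun h => h.2.false) r₂
  have hS : S₁ = S₂ := (hC.2 e).unique ⟨hS₁, heS₁⟩ ⟨hS₂, heS₂⟩
  obtain ⟨p, hbp, hpe, hp⟩ := exists_rel_of_reachAvoid_quot hbe (by omega) <|
    hS₁.reachAvoid heS₁ hends fun f hf hfe hfF => hfF <| by
      have h₁ := not_not.1 ((hF₁ f).not.1 (hS₁F f hf hfe))
      have h₂ := not_not.1 ((hF₂ f).not.1 (hS₂F f (hS ▸ hf) hfe))
      simp only [Fin.le_def, Fin.lt_def] at h₁ h₂ ⊢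
      omega
  exact ⟨p, hbp, hpe.trans_lt hec, hp⟩

lemma not_isCactus_of_cross {a b c d : Fin n} (hab : a < b) (hbc : b < c) (hcd : c < d)
    (hac : σ.r a c) (hbd : σ.r b d) (hnab : ¬ σ.r a b) :
    ¬ ((cycleGraph n).quot σ).IsCactus := by
  intro hC
  obtain ⟨p, hbp, hpc, hp⟩ := exists_rel_between_of_isCactus hC hab hbc hcd hac hbd
  rcases hbp.lt_or_eq with hbp | rfl
  · exact not_isCactus_of_cross hab hbp (hpc.trans hcd) (σ.trans' hac (σ.symm' hp)) hbd hnab hC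
  · exact hnab (σ.trans' hac (σ.symm' hp))
termination_by c.val - b.val
decreasing_by simp only [Fin.lt_def] at hbp hpc; omega

theorem nonCrossingRel_of_isCactus (hC : ((cycleGraph n).quot σ).IsCactus) :
    NonCrossingRel σ.r :=
  fun ⟨_, _, _, _, hab, hbc, hcd, hac, hbd, hnab⟩ =>
    not_isCactus_of_cross hab hbc hcd hac hbd hnab hC

end Cactus

/-- Let `C` be the cycle graph of length `n` and `π` a partition of its
vertex set.  The quotient multigraph `C^π` is a cactus iff `π` is non-crossing. -/
theorem stmt_1 (n : ℕ) [NeZero n] (σ : Setoid (Fin n)) :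
    ((cycleGraph n).quot σ).IsCactus ↔ NonCrossingRel σ.r :=
  ⟨nonCrossingRel_of_isCactus, isCactus_quot_cycleGraph⟩
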